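/- Let M^O = [[0, 3, −1, 0], [−5/3, 0, 0, 3], [0, 0, 0, 0], [0, 0, 0, 0]], M^L = [[9/2, 0, 0, −9/2], [0, 0, 0, 0], [0, −3, 1, 0], [3/2, 0, 0, −3/2]], M^R = [[0, 0, 0, 0], [0, −1, 0, 0], [0, 0, 0, 0], [1, 0, 0, −3]] be the 4×4 complex matrices defining the new exact scar state |Θ₂⟩ of the PXP chain. Then for every n ≥ 2 and every Fibonacci-allowed cyclic word s : ZMod n → {O, L, R}, Σ_{k ∈ ZMod n} Tr(F^{s_k} · M^{s_{k+1}} ⋯ M^{s_{k+n−1}}) = 0. (Hence |Θ₂⟩ is an exact E = 0 eigenstate of the periodic PXP chain.) -/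
import Mathlib


open Matrix

/-- The blocked three-letter alphabet `{O, L, R}`. -/
inductive Blk | O | L | R
deriving DecidableEq

/-- The MPS tensors of the new exact scar state `|Θ₂⟩` of the PXP chain. -/
noncomputable def MTheta2 : Blk → Matrix (Fin 4) (Fin 4) ℂ
  | .O => !![0, 3, -1, 0; -5/3, 0, 0, 3; 0, 0, 0, 0; 0, 0, 0, 0]
  | .L => !![9/2, 0, 0, -9/2; 0, 0, 0, 0; 0, -3, 1, 0; 3/2, 0, 0, -3/2]
  | .R => !![0, 0, 0, 0; 0, -1, 0, 0; 0, 0, 0, 0; 1, 0, 0, -3]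

/-- The defect matrices: `F^O = M^L + M^R`, `F^L = F^R = M^O`. -/
noncomputable def FTheta2 : Blk → Matrix (Fin 4) (Fin 4) ℂ
  | .O => MTheta2 .L + MTheta2 .R
  | .L => MTheta2 .O
  | .R => MTheta2 .O

/-- Auxiliary matrices realizing the local cancellation. -/
noncomputable def YTheta2 : Blk → Matrix (Fin 4) (Fin 4) ℂ
  | .O => !![-5, 0, 0, 9; 0, 1/2, -1/6, 0; 0, 3, -1, 0; -5/2, 0, 0, 9/2]
  | .L => !![0, 15/4, -5/4, 0; 5/3, 0, 0, -3; 1/2, 0, 0, -9/2; 0, 9/4, -3/4, 0]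
  | .R => !![0, -3, 0, 0; 3/2, 0, 0, -9/2; 0, 0, 0, 0; 0, -3/2, 0, 0]

theorem mul_fin_four' {α} [AddCommMonoid α] [Mul α]
    (a₁₁ a₁₂ a₁₃ a₁₄ a₂₁ a₂₂ a₂₃ a₂₄ a₃₁ a₃₂ a₃₃ a₃₄ a₄₁ a₄₂ a₄₃ a₄₄
     b₁₁ b₁₂ b₁₃ b₁₄ b₂₁ b₂₂ b₂₃ b₂₄ b₃₁ b₃₂ b₃₃ b₃₄ b₄₁ b₄₂ b₄₃ b₄₄ : α) :
    !![a₁₁, a₁₂, a₁₃, a₁₄; a₂₁, a₂₂, a₂₃, a₂₄; a₃₁, a₃₂, a₃₃, a₃₄; a₄₁, a₄₂, a₄₃, a₄₄] *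
    !![b₁₁, b₁₂, b₁₃, b₁₄; b₂₁, b₂₂, b₂₃, b₂₄; b₃₁, b₃₂, b₃₃, b₃₄; b₄₁, b₄₂, b₄₃, b₄₄] =
    !![a₁₁*b₁₁ + a₁₂*b₂₁ + a₁₃*b₃₁ + a₁₄*b₄₁, a₁₁*b₁₂ + a₁₂*b₂₂ + a₁₃*b₃₂ + a₁₄*b₄₂,
       a₁₁*b₁₃ + a₁₂*b₂₃ + a₁₃*b₃₃ + a₁₄*b₄₃, a₁₁*b₁₄ + a₁₂*b₂₄ + a₁₃*b₃₄ + a₁₄*b₄₄;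
       a₂₁*b₁₁ + a₂₂*b₂₁ + a₂₃*b₃₁ + a₂₄*b₄₁, a₂₁*b₁₂ + a₂₂*b₂₂ + a₂₃*b₃₂ + a₂₄*b₄₂,
       a₂₁*b₁₃ + a₂₂*b₂₃ + a₂₃*b₃₃ + a₂₄*b₄₃, a₂₁*b₁₄ + a₂₂*b₂₄ + a₂₃*b₃₄ + a₂₄*b₄₄;
       a₃₁*b₁₁ + a₃₂*b₂₁ + a₃₃*b₃₁ + a₃₄*b₄₁, a₃₁*b₁₂ + a₃₂*b₂₂ + a₃₃*b₃₂ + a₃₄*b₄₂,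
       a₃₁*b₁₃ + a₃₂*b₂₃ + a₃₃*b₃₃ + a₃₄*b₄₃, a₃₁*b₁₄ + a₃₂*b₂₄ + a₃₃*b₃₄ + a₃₄*b₄₄;
       a₄₁*b₁₁ + a₄₂*b₂₁ + a₄₃*b₃₁ + a₄₄*b₄₁, a₄₁*b₁₂ + a₄₂*b₂₂ + a₄₃*b₃₂ + a₄₄*b₄₂,
       a₄₁*b₁₃ + a₄₂*b₂₃ + a₄₃*b₃₃ + a₄₄*b₄₃, a₄₁*b₁₄ + a₄₂*b₂₄ + a₄₃*b₃₄ + a₄₄*b₄₄] := by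
  ext i j
  fin_cases i <;> fin_cases j <;>
    simp [Matrix.mul_apply, Fin.sum_univ_succ, ← add_assoc]

lemma FTheta2_O_eq :
    FTheta2 Blk.O = !![9/2, 0, 0, -9/2; 0, -1, 0, 0; 0, -3, 1, 0; 5/2, 0, 0, -9/2] := by
  show MTheta2 Blk.L + MTheta2 Blk.R = _
  rw [MTheta2, MTheta2]
  ext i j
  fin_cases i <;> fin_cases j <;> norm_num [Matrix.add_apply]

set_option maxHeartbeats 2000000 in
/-- The local two-site cancellation identity on Fibonacci-allowed pairs. -/
lemma Theta2_local (a b : Blk) (h : ¬ (a = Blk.R ∧ b = Blk.L)) :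
    FTheta2 a * MTheta2 b
      = MTheta2 a * YTheta2 b - YTheta2 a * MTheta2 b := by
  cases a <;> cases b
  case R.L => exact absurd ⟨rfl, rfl⟩ h
  all_goals
    simp only [FTheta2_O_eq, FTheta2, MTheta2, YTheta2, mul_fin_four']
    ext i j
    fin_cases i <;> fin_cases j <;> norm_num [Matrix.sub_apply]

lemma prod_split (m : ℕ) (s : ZMod (m + 2) → Blk) (k : ZMod (m + 2)) :
    (List.ofFn fun j : Fin (m + 1) =>
        MTheta2 (s (k + 1 + ((j : ℕ) : ZMod (m + 2))))).prod
      = MTheta2 (s (k + 1)) *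
        (List.ofFn fun j : Fin m =>
          MTheta2 (s (k + 2 + ((j : ℕ) : ZMod (m + 2))))).prod := by
  rw [List.ofFn_succ, List.prod_cons]
  have hf : (fun i : Fin m =>
      MTheta2 (s (k + 1 + (((i.succ : Fin (m+1)) : ℕ) : ZMod (m + 2)))))
      = fun j : Fin m => MTheta2 (s (k + 2 + ((j : ℕ) : ZMod (m + 2)))) := by
    funext i
    have hidx : k + 1 + (((i.succ : Fin (m+1)) : ℕ) : ZMod (m + 2))
        = k + 2 + ((i : ℕ) : ZMod (m + 2)) := by
      push_cast [Fin.val_succ]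
      ring
    rw [hidx]
  rw [hf]
  norm_num

lemma prod_rot (m : ℕ) (s : ZMod (m + 2) → Blk) (k : ZMod (m + 2)) :
    (List.ofFn fun j : Fin (m + 1) =>
        MTheta2 (s (k + 1 + 1 + ((j : ℕ) : ZMod (m + 2))))).prod
      = (List.ofFn fun j : Fin m =>
          MTheta2 (s (k + 2 + ((j : ℕ) : ZMod (m + 2))))).prod * MTheta2 (s k) := by
  rw [List.ofFn_succ', List.concat_eq_append, List.prod_append, List.prod_cons,
    List.prod_nil, mul_one]
  have hf : (fun i : Fin m =>
      MTheta2 (s (k + 1 + 1 + (((i.castSucc : Fin (m+1)) : ℕ) : ZMod (m + 2)))))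
      = fun j : Fin m => MTheta2 (s (k + 2 + ((j : ℕ) : ZMod (m + 2)))) := by
    funext i
    have hidx : k + 1 + 1 + (((i.castSucc : Fin (m+1)) : ℕ) : ZMod (m + 2))
        = k + 2 + ((i : ℕ) : ZMod (m + 2)) := by
      push_cast [Fin.coe_castSucc]
      ring
    rw [hidx]
  have hlast : k + 1 + 1 + (((Fin.last m : Fin (m+1)) : ℕ) : ZMod (m + 2)) = k := by
    have h2 : ((m : ℕ) : ZMod (m + 2)) + 2 = 0 := by
      have := ZMod.natCast_self (m + 2)
      push_cast at this
      linear_combination this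
    simp only [Fin.val_last]
    linear_combination h2
  rw [hf, hlast]

/-- for the `|Θ₂⟩` MPS tensors, the cyclic insertion sum
vanishes on every Fibonacci-allowed cyclic word, hence `|Θ₂⟩` is an exact
`E = 0` eigenstate of the periodic PXP chain. -/
theorem Theta2_cyclic_insertion_sum_eq_zero
    (n : ℕ) [NeZero n] (hn : 2 ≤ n)
    (s : ZMod n → Blk)
    (hfib : ¬ ∃ k : ZMod n, s k = Blk.R ∧ s (k + 1) = Blk.L) :
    ∑ k : ZMod n,
      Matrix.trace (FTheta2 (s k) *
        (List.ofFn fun j : Fin (n - 1) =>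
          MTheta2 (s (k + 1 + ((j : ℕ) : ZMod n)))).prod) = 0 := by
  obtain ⟨m, rfl⟩ : ∃ m, n = m + 2 := ⟨n - 2, by omega⟩
  push_neg at hfib
  set G : ZMod (m + 2) → ℂ := fun k =>
    Matrix.trace (YTheta2 (s k) *
      (List.ofFn fun j : Fin (m + 1) =>
        MTheta2 (s (k + 1 + ((j : ℕ) : ZMod (m + 2))))).prod) with hG
  have hterm : ∀ k : ZMod (m + 2),
      Matrix.trace (FTheta2 (s k) *
        (List.ofFn fun j : Fin (m + 2 - 1) =>
          MTheta2 (s (k + 1 + ((j : ℕ) : ZMod (m + 2))))).prod)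
      = G (k + 1) - G k := by
    intro k
    show Matrix.trace (FTheta2 (s k) *
        (List.ofFn fun j : Fin (m + 1) =>
          MTheta2 (s (k + 1 + ((j : ℕ) : ZMod (m + 2))))).prod)
      = G (k + 1) - G k
    simp only [hG]
    rw [prod_split m s k, ← mul_assoc,
      Theta2_local _ _ (fun h => hfib k h.1 h.2), sub_mul, Matrix.trace_sub]
    congr 1
    · rw [prod_rot m s k, mul_assoc, Matrix.trace_mul_comm, mul_assoc]
    · rw [mul_assoc]
  refine Eq.trans (Finset.sum_congr rfl fun k _ => hterm k) ?_
  rw [Finset.sum_sub_distrib]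
  rw [Fintype.sum_equiv (Equiv.addRight (1 : ZMod (m + 2))) (fun k => G (k + 1))
    G (fun k => rfl)]
  exact sub_self _
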